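/- (Theorem 2.6) Let G be a countable group admitting a Følner sequence, and let ν be a multiorder on G, i.e. a G-invariant Borel probability measure on the space Õ of orders of type ℤ on G. Then ν has the Følner property: for ν-almost every ≺ ∈ Õ, the sequence of order intervals ([e, b_n]^≺)_{n∈ℕ}, where b_n = bi_≺(n) is the n-th successor of e in ≺ (so that [e,b_n]^≺ = {bi_≺(0), bi_≺(1), …, bi_≺(n)}), is a Følner sequence in G. -/

import Mathlib

open MeasureTheory Filter
open scoped Classical symmDiff

/-- An *order of type ℤ* on `G`. -/
def IsZOrder {G : Type*} (r : G → G → Prop) : Prop :=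
  IsStrictTotalOrder G r ∧ (∀ a b : G, {g : G | r a g ∧ r g b}.Finite) ∧
    (∀ a : G, ∃ b, r b a) ∧ (∀ a : G, ∃ b, r a b)

/-- The relation on `G` encoded by an element of `{0,1}^{G×G}`. -/
def relOf {G : Type*} (x : G × G → Bool) : G → G → Prop := fun a b => x (a, b) = true

/-- The set `Õ` of orders of type ℤ on `G`, as a subset of `{0,1}^{G×G}`. -/
def ZOrders (G : Type*) : Set (G × G → Bool) := {x | IsZOrder (relOf x)}

/-- The `G`-action on `{0,1}^{G×G}` corresponding to `a (g(≺)) b ⟺ ag ≺ bg`. -/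
def actB {G : Type*} [Group G] (g : G) (x : G × G → Bool) : G × G → Bool :=
  fun p => x (p.1 * g, p.2 * g)

/-- `f : ℤ → G` is an anchored order isomorphism from `(ℤ,<)` to `(G,r)`. -/
def IsAnchoredIso {G : Type*} [One G] (r : G → G → Prop) (f : ℤ → G) : Prop :=
  Function.Bijective f ∧ f 0 = 1 ∧ ∀ i j : ℤ, i < j ↔ r (f i) (f j)

/-- The anchored bijection `bi_≺ : ℤ → G` associated with an order of type ℤ
(junk value if it does not exist). -/
noncomputable def biOf {G : Type*} [One G] (r : G → G → Prop) : ℤ → G :=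
  if h : ∃ f : ℤ → G, IsAnchoredIso r f then h.choose else fun _ => 1

/-- A Følner sequence in `G`: a sequence of nonempty finite sets `F n` with
`|F n △ g·F n| / |F n| → 0` for every `g ∈ G`. -/
def IsFolnerSeq {G : Type*} [Group G] (F : ℕ → Finset G) : Prop :=
  (∀ n, (F n).Nonempty) ∧ ∀ g : G,
    Tendsto (fun n => ((F n ∆ (F n).image (fun h => g * h)).card : ℝ) / (F n).card)
      atTop (nhds 0)


/-!
Re-anchoring an order of type ℤ at the successor `b₁` of `e` (the map `succShift`, which is the
translation `x ↦ b₁ x`) preserves every `G`-invariant measure: on the set where `b₁ = b` it is the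
translation by `b`, which maps that set onto the set where `b₋₁ = b⁻¹`. Its `i`-th iterate
re-anchors at `b_i`, so `g b_i` lies within `M` steps of `b_i` unless the `i`-th iterate visits the
set `farSet g M` of orders in which `g` is more than `M` steps from `e`. These sets decrease to `∅`,
so by the maximal ergodic lemma, almost surely the frequency of such visits along the whole orbit is
as small as we like once `M` is large. Away from these visits and from `M` indices at either end,
`[e, b_n]` and `g [e, b_n]` match up, whence `|[e, b_n] △ g [e, b_n]| = o(n)`.
-/

open Function Finset

theorem MeasureTheory.measurePreserving_of_pieces {X ι : Type*} [MeasurableSpace X] [Countable ι]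
    {μ : Measure X} {f : X → X} {T : ι → X → X} {A B : ι → Set X} {C : Set X}
    (hT : ∀ i, MeasurePreserving (T i) μ μ) (hB : ∀ i, MeasurableSet (B i))
    (hAd : Pairwise (Disjoint on A)) (hBd : Pairwise (Disjoint on B))
    (hAB : ∀ i, A i = T i ⁻¹' B i) (hAC : ⋃ i, A i = C) (hBC : ⋃ i, B i = C)
    (hfA : ∀ i, Set.EqOn f (T i) (A i)) (hfC : Set.EqOn f id Cᶜ) : MeasurePreserving f μ μ := by
  have hC : MeasurableSet C := hBC ▸ MeasurableSet.iUnion hB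
  have hpieces : ∀ S, C ∩ f ⁻¹' S = ⋃ i, T i ⁻¹' (B i ∩ S) := fun S => by
    rw [← hAC, Set.iUnion_inter]
    refine Set.iUnion_congr fun i => ?_
    rw [(hfA i).inter_preimage_eq, hAB, Set.preimage_inter]
  have hpieces_meas : ∀ S, MeasurableSet S → MeasurableSet (⋃ i, T i ⁻¹' (B i ∩ S)) :=
    fun S hS => .iUnion fun i => (hT i).measurable ((hB i).inter hS)
  have hpieces_disj : ∀ S, Pairwise (Disjoint on fun i => T i ⁻¹' (B i ∩ S)) :=
    fun S i j hij => (hAd hij).mono (hAB i ▸ Set.preimage_mono Set.inter_subset_left)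
      (hAB j ▸ Set.preimage_mono Set.inter_subset_left)
  have hrest : ∀ S, Cᶜ ∩ f ⁻¹' S = Cᶜ ∩ S := fun S => hfC.inter_preimage_eq S
  have hmeas : Measurable f := fun S hS => by
    rw [← Set.inter_union_compl (f ⁻¹' S) C, Set.inter_comm, hpieces, Set.inter_comm, hrest]
    exact (hpieces_meas S hS).union (hC.compl.inter hS)
  refine ⟨hmeas, Measure.ext fun S hS => ?_⟩
  rw [Measure.map_apply hmeas hS, ← measure_inter_add_sdiff (f ⁻¹' S) hC, Set.sdiff_eq_compl_inter,
    hrest, Set.inter_comm, hpieces, measure_iUnion (hpieces_disj S) fun i =>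
      (hT i).measurable ((hB i).inter hS)]
  simp_rw [(hT _).measure_preimage ((hB _).inter hS).nullMeasurableSet]
  rw [← measure_iUnion (fun i j hij => (hBd hij).mono Set.inter_subset_left Set.inter_subset_left)
    fun i => (hB i).inter hS, ← Set.iUnion_inter, hBC, Set.inter_comm, ← Set.sdiff_eq_compl_inter,
    measure_inter_add_sdiff S hC]

section MaximalErgodic

variable {X : Type*}

/-- `birkhoffMax T f N = max_{0 ≤ n ≤ N} birkhoffSum T f n`, computed by the recursion
`M_{N+1} = max 0 (f + M_N ∘ T)` on which Garsia's proof of the maximal ergodic lemma rests. -/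
noncomputable def birkhoffMax (T : X → X) (f : X → ℝ) : ℕ → X → ℝ
  | 0 => 0
  | N + 1 => fun x => max 0 (f x + birkhoffMax T f N (T x))

variable {T : X → X} {f : X → ℝ}

theorem birkhoffMax_nonneg (N : ℕ) (x : X) : 0 ≤ birkhoffMax T f N x := by
  cases N
  · rfl
  · exact le_max_left _ _

theorem birkhoffMax_le_succ (N : ℕ) (x : X) : birkhoffMax T f N x ≤ birkhoffMax T f (N + 1) x := by
  induction N generalizing x with
  | zero => exact birkhoffMax_nonneg 1 x
  | succ N ih => exact max_le_max le_rfl (add_le_add le_rfl (ih (T x)))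

theorem birkhoffSum_le_birkhoffMax {n N : ℕ} (h : n ≤ N) (x : X) :
    birkhoffSum T f n x ≤ birkhoffMax T f N x := by
  induction n generalizing N x with
  | zero => exact (birkhoffSum_zero T f x).trans_le (birkhoffMax_nonneg N x)
  | succ n ih =>
    cases N with
    | zero => omega
    | succ N =>
      rw [birkhoffSum_succ']
      exact le_max_of_le_right (add_le_add le_rfl (ih (by omega) (T x)))

variable [MeasurableSpace X] {μ : Measure X}

theorem integrable_birkhoffMax (hT : MeasurePreserving T μ μ) (hf : Integrable f μ) (N : ℕ) :
    Integrable (birkhoffMax T f N) μ := by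
  induction N with
  | zero => exact integrable_zero X ℝ μ
  | succ N ih => exact (integrable_zero X ℝ μ).sup (hf.add (hT.integrable_comp_of_integrable ih))

/-- Garsia's form of the maximal ergodic lemma. -/
theorem setIntegral_birkhoffMax_pos_nonneg (hT : MeasurePreserving T μ μ) (hf : Integrable f μ)
    (N : ℕ) : 0 ≤ ∫ x in {x | 0 < birkhoffMax T f N x}, f x ∂μ := by
  cases N with
  | zero => simp [birkhoffMax]
  | succ N =>
    set A := {x | 0 < birkhoffMax T f (N + 1) x}
    have hMint := integrable_birkhoffMax hT hf
    have hMTint : Integrable (fun x => birkhoffMax T f N (T x)) μ :=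
      hT.integrable_comp_of_integrable (hMint N)
    have hA : NullMeasurableSet A μ :=
      nullMeasurableSet_lt aemeasurable_const (hMint (N + 1)).aemeasurable
    have hcomp : ∫ x, birkhoffMax T f N (T x) ∂μ = ∫ x, birkhoffMax T f N x ∂μ := by
      rw [← integral_map hT.aemeasurable (by rw [hT.map_eq]; exact (hMint N).aestronglyMeasurable),
        hT.map_eq]
    have hpt : ∀ x, birkhoffMax T f (N + 1) x - birkhoffMax T f N (T x) ≤ A.indicator f x := by
      intro x
      by_cases hx : x ∈ A
      · have hpos : 0 < f x + birkhoffMax T f N (T x) := by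
          simpa [A, birkhoffMax, lt_max_iff] using hx
        rw [Set.indicator_of_mem hx]
        simp only [birkhoffMax, max_eq_right hpos.le, add_sub_cancel_right, le_refl]
      · rw [Set.indicator_of_notMem hx]
        have := birkhoffMax_nonneg (T := T) (f := f) N (T x)
        simp only [A, Set.mem_ofPred_eq, not_lt] at hx
        linarith
    calc 0 ≤ ∫ x, birkhoffMax T f (N + 1) x ∂μ - ∫ x, birkhoffMax T f N x ∂μ :=
          sub_nonneg.2 (integral_mono (hMint N) (hMint (N + 1)) (birkhoffMax_le_succ N))
      _ = ∫ x, (birkhoffMax T f (N + 1) x - birkhoffMax T f N (T x)) ∂μ := by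
          rw [integral_sub (hMint (N + 1)) hMTint, hcomp]
      _ ≤ ∫ x, A.indicator f x ∂μ :=
          integral_mono ((hMint (N + 1)).sub hMTint) (hf.indicator₀ hA) hpt
      _ = ∫ x in A, f x ∂μ := integral_indicator₀ hA

theorem ofReal_mul_measure_exists_lt_birkhoffSum_le [IsFiniteMeasure μ]
    (hT : MeasurePreserving T μ μ) {E : Set X} (hE : MeasurableSet E) {c : ℝ} (hc : 0 ≤ c) :
    ENNReal.ofReal c * μ {x | ∃ n : ℕ, c * n < birkhoffSum T (E.indicator 1) n x} ≤ μ E := by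
  set f : X → ℝ := E.indicator 1 - fun _ => c
  have hf : Integrable f μ := ((integrable_const 1).indicator hE).sub (integrable_const c)
  set A : ℕ → Set X := fun N => {x | 0 < birkhoffMax T f N x}
  have hA : ∀ N, ENNReal.ofReal c * μ (A N) ≤ μ E := fun N => by
    have h := setIntegral_birkhoffMax_pos_nonneg hT hf N
    have hint : ∫ x in A N, f x ∂μ = μ.real (A N ∩ E) - μ.real (A N) * c := by
      simp only [f, Pi.sub_apply, Pi.one_def]
      rw [integral_sub ((integrable_const 1).indicator hE).restrict (integrable_const c),
        setIntegral_indicator hE, setIntegral_const, setIntegral_const, smul_eq_mul,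
        smul_eq_mul, mul_one]
    rw [hint, sub_nonneg] at h
    rw [← ofReal_measureReal, ← ofReal_measureReal, ← ENNReal.ofReal_mul hc]
    exact ENNReal.ofReal_le_ofReal
      ((mul_comm c _).trans_le (h.trans (measureReal_mono Set.inter_subset_right)))
  have hmono : Monotone A :=
    monotone_nat_of_le_succ fun N x hx => hx.trans_le (birkhoffMax_le_succ N x)
  have hsub : {x | ∃ n : ℕ, c * n < birkhoffSum T (E.indicator 1) n x} ⊆ ⋃ N, A N := by
    rintro x ⟨n, hn⟩
    have hsum : birkhoffSum T f n x = birkhoffSum T (E.indicator 1) n x - c * n := by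
      simp [f, birkhoffSum, mul_comm c]
    exact Set.mem_iUnion.2 ⟨n, (birkhoffSum_le_birkhoffMax le_rfl x).trans_lt' (by linarith)⟩
  calc ENNReal.ofReal c * μ {x | ∃ n : ℕ, c * n < birkhoffSum T (E.indicator 1) n x}
      ≤ ENNReal.ofReal c * μ (⋃ N, A N) := by gcongr
    _ ≤ μ E := le_of_tendsto' (ENNReal.Tendsto.const_mul (tendsto_measure_iUnion_atTop hmono)
        (.inr ENNReal.ofReal_ne_top)) hA

theorem ae_forall_exists_birkhoffSum_indicator_le [IsFiniteMeasure μ]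
    (hT : MeasurePreserving T μ μ) {E : ℕ → Set X} (hE : ∀ M, MeasurableSet (E M))
    (hlim : Tendsto (fun M => μ (E M)) atTop (nhds 0)) :
    ∀ᵐ x ∂μ, ∀ ε : ℝ, 0 < ε → ∃ M, ∀ n : ℕ, birkhoffSum T ((E M).indicator 1) n x ≤ ε * n := by
  have hfixed : ∀ c : ℝ, 0 < c →
      ∀ᵐ x ∂μ, ∃ M, ∀ n : ℕ, birkhoffSum T ((E M).indicator 1) n x ≤ c * n := by
    intro c hc
    have hc' : ENNReal.ofReal c ≠ 0 := (ENNReal.ofReal_pos.2 hc).ne'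
    have hlim' : Tendsto (fun M => μ (E M) / ENNReal.ofReal c) atTop (nhds 0) := by
      simpa using ENNReal.Tendsto.div_const hlim (.inr hc')
    simp only [ae_iff, not_exists, not_forall, not_le]
    refine nonpos_iff_eq_zero.1 (ge_of_tendsto' hlim' fun M => ?_)
    rw [ENNReal.le_div_iff_mul_le (.inl hc') (.inl ENNReal.ofReal_ne_top), mul_comm]
    refine le_trans ?_ (ofReal_mul_measure_exists_lt_birkhoffSum_le hT (hE M) hc.le)
    gcongr with x
    exact fun hx => hx M
  filter_upwards [ae_all_iff.2 fun k : ℕ => hfixed (1 / ((k : ℝ) + 1)) Nat.one_div_pos_of_nat]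
    with x hx ε hε
  obtain ⟨k, hk⟩ := exists_nat_one_div_lt hε
  obtain ⟨M, hM⟩ := hx k
  exact ⟨M, fun n => (hM n).trans (by gcongr)⟩

end MaximalErgodic

section Folner

theorem tendsto_zero_of_le_div_add_one_add {a : ℕ → ℝ} (h0 : ∀ n, 0 ≤ a n)
    (h : ∀ ε > 0, ∃ C, ∀ n, a n ≤ C / (n + 1) + ε) : Tendsto a atTop (nhds 0) := by
  refine tendsto_order.2 ⟨fun c hc => .of_forall fun n => hc.trans_le (h0 n), fun ε hε => ?_⟩
  obtain ⟨C, hC⟩ := h (ε / 2) (half_pos hε)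
  have hCn : Tendsto (fun n : ℕ => C / ((n : ℝ) + 1)) atTop (nhds 0) := by
    simpa [div_eq_mul_inv] using (tendsto_one_div_add_atTop_nhds_zero_nat (𝕜 := ℝ)).const_mul C
  filter_upwards [hCn.eventually (gt_mem_nhds (half_pos hε))] with n hn
  linarith [hC n]

variable {G : Type*} [Group G]

noncomputable def farIndices (b : ℤ → G) (g : G) (M n : ℕ) : Finset ℕ :=
  (range n).filter fun i => ∀ k : ℤ, |k| ≤ M → b (k + i) ≠ g * b i

theorem card_sdiff_image_mul_le (b : ℤ → G) (g : G) (M n : ℕ) :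
    #((range (n + 1)).image (fun i : ℕ => b i) \
        ((range (n + 1)).image (fun i : ℕ => b i)).image (fun h => g * h)) ≤
      2 * M + #(farIndices b g⁻¹ M (n + 1)) := by
  set F := (range (n + 1)).image (fun i : ℕ => b i)
  have hsub : F \ F.image (fun h => g * h) ⊆
      ((range M ∪ Ioc (n - M) n) ∪ farIndices b g⁻¹ M (n + 1)).image (fun i : ℕ => b i) := by
    intro c hc
    obtain ⟨hcF, hcgF⟩ := Finset.mem_sdiff.1 hc
    obtain ⟨i, hi, rfl⟩ := Finset.mem_image.1 hcF
    refine Finset.mem_image.2 ⟨i, ?_, rfl⟩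
    simp only [farIndices, Finset.mem_union, Finset.mem_range, Finset.mem_Ioc,
      Finset.mem_filter] at hi ⊢
    by_contra! hnear
    obtain ⟨k, hk, hbk⟩ := hnear.2 hi
    rw [abs_le] at hk
    refine hcgF (Finset.mem_image.2 ⟨b (k + i), Finset.mem_image.2 ⟨(k + i).toNat, ?_, ?_⟩, ?_⟩)
    · rw [Finset.mem_range]
      omega
    · rw [Int.toNat_of_nonneg (by omega)]
    · rw [hbk, mul_inv_cancel_left]
  calc #(F \ F.image (fun h => g * h))
      ≤ #((range M ∪ Ioc (n - M) n) ∪ farIndices b g⁻¹ M (n + 1)) :=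
        (Finset.card_le_card hsub).trans Finset.card_image_le
    _ ≤ #(range M) + #(Ioc (n - M) n) + #(farIndices b g⁻¹ M (n + 1)) :=
        (Finset.card_union_le _ _).trans (Nat.add_le_add_right (Finset.card_union_le _ _) _)
    _ ≤ 2 * M + #(farIndices b g⁻¹ M (n + 1)) := by
        rw [Finset.card_range, Nat.card_Ioc]
        omega

theorem isFolnerSeq_image_of_farIndices {b : ℤ → G} (hb : Injective b)
    (hfar : ∀ g ε, 0 < ε → ∃ M, ∀ n, (#(farIndices b g M n) : ℝ) ≤ ε * n) :
    IsFolnerSeq fun n => (range (n + 1)).image (fun i : ℕ => b i) := by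
  refine ⟨fun n => Finset.nonempty_range_add_one.image _, fun g => ?_⟩
  refine tendsto_zero_of_le_div_add_one_add (fun n => by positivity) fun ε hε => ?_
  obtain ⟨M₁, hM₁⟩ := hfar g⁻¹ (ε / 2) (half_pos hε)
  obtain ⟨M₂, hM₂⟩ := hfar g (ε / 2) (half_pos hε)
  refine ⟨2 * M₁ + 2 * M₂, fun n => ?_⟩
  dsimp only
  set F := (range (n + 1)).image (fun i : ℕ => b i)
  have hF : #F = n + 1 :=
    (Finset.card_image_of_injective _ (hb.comp Nat.cast_injective)).trans (Finset.card_range _)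
  have hswap : #(F.image (fun h => g * h) \ F) = #(F \ F.image (fun h => g⁻¹ * h)) := by
    rw [← Finset.card_image_of_injective _ (mul_right_injective g⁻¹),
      Finset.image_sdiff _ _ (mul_right_injective g⁻¹), Finset.image_image]
    simp only [Function.comp_def, inv_mul_cancel_left, Finset.image_id']
  have hcard : #(F ∆ F.image (fun h => g * h)) ≤
      2 * M₁ + #(farIndices b g⁻¹ M₁ (n + 1)) + (2 * M₂ + #(farIndices b g M₂ (n + 1))) := by
    refine (Finset.card_union_le _ _).trans (Nat.add_le_add (card_sdiff_image_mul_le b g M₁ n) ?_)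
    rw [hswap]
    simpa using card_sdiff_image_mul_le b g⁻¹ M₂ n
  have hcardR := (Nat.cast_le (α := ℝ)).2 hcard
  push_cast at hcardR
  rw [hF, Nat.cast_add_one, div_le_iff₀ (by positivity), add_mul, div_mul_cancel₀ _ (by positivity)]
  have h₁ := hM₁ (n + 1)
  have h₂ := hM₂ (n + 1)
  push_cast at h₁ h₂
  linarith

end Folner

def RelCovBy {G : Type*} (r : G → G → Prop) (a c : G) : Prop := r a c ∧ ∀ g, ¬ (r a g ∧ r g c)

theorem isZOrder_iff {G : Type*} (r : G → G → Prop) : IsZOrder r ↔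
    (∀ a b, ¬ r a b → ¬ r b a → a = b) ∧ (∀ a, ¬ r a a) ∧ (∀ a b c, r a b → r b c → r a c) ∧
    (∀ a b, ∃ S : Finset G, ∀ g, r a g → r g b → g ∈ S) ∧
    (∀ a, ∃ b, r b a) ∧ (∀ a, ∃ b, r a b) := by
  constructor
  · rintro ⟨h, hfin, hmin, hmax⟩
    exact ⟨fun a b => Std.Trichotomous.trichotomous a b, irrefl, fun a b c => _root_.trans,
      fun a b => ⟨(hfin a b).toFinset, fun g hag hgb => (hfin a b).mem_toFinset.2 ⟨hag, hgb⟩⟩,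
      hmin, hmax⟩
  · rintro ⟨htri, hirr, htrans, hfin, hmin, hmax⟩
    refine ⟨{ trichotomous := htri, irrefl := hirr, trans := htrans }, fun a b => ?_, hmin, hmax⟩
    obtain ⟨S, hS⟩ := hfin a b
    exact S.finite_toSet.subset fun g hg => hS g hg.1 hg.2

section AnchoredIso

variable {G : Type*} [One G] {r : G → G → Prop} {f : ℤ → G}

namespace IsAnchoredIso

theorem relCovBy_iff (hf : IsAnchoredIso r f) (i j : ℤ) :
    RelCovBy r (f i) (f j) ↔ j = i + 1 := by
  obtain ⟨hbij, -, hord⟩ := hf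
  constructor
  · rintro ⟨hij, hgap⟩
    have hlt := (hord i j).2 hij
    by_contra hne
    exact hgap (f (i + 1)) ⟨(hord _ _).1 (by omega), (hord _ _).1 (by omega)⟩
  · rintro rfl
    refine ⟨(hord _ _).1 (by omega), fun g ⟨h1, h2⟩ => ?_⟩
    obtain ⟨m, rfl⟩ := hbij.2 g
    have := (hord _ _).2 h1
    have := (hord _ _).2 h2
    omega

theorem apply_add_one_eq_iff (hf : IsAnchoredIso r f) (i : ℤ) (c : G) :
    f (i + 1) = c ↔ RelCovBy r (f i) c := by
  obtain ⟨j, rfl⟩ := hf.1.2 c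
  rw [hf.relCovBy_iff, hf.1.1.eq_iff, eq_comm]

theorem apply_sub_one_eq_iff (hf : IsAnchoredIso r f) (i : ℤ) (c : G) :
    f (i - 1) = c ↔ RelCovBy r c (f i) := by
  obtain ⟨j, rfl⟩ := hf.1.2 c
  rw [hf.relCovBy_iff, hf.1.1.eq_iff]
  omega

theorem unique {f' : ℤ → G} (hf : IsAnchoredIso r f) (hf' : IsAnchoredIso r f') : f = f' := by
  funext i
  induction i using Int.induction_on with
  | zero => rw [hf.2.1, hf'.2.1]
  | succ i ih => rw [hf.apply_add_one_eq_iff, ih, ← hf'.apply_add_one_eq_iff]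
  | pred i ih => rw [hf.apply_sub_one_eq_iff, ih, ← hf'.apply_sub_one_eq_iff]

theorem isZOrder (hf : IsAnchoredIso r f) : IsZOrder r := by
  obtain ⟨hbij, -, hord⟩ := hf
  have hr : ∀ i j, r (f i) (f j) ↔ i < j := fun i j => (hord i j).symm
  refine ⟨{ trichotomous := ?_, irrefl := ?_, trans := ?_ }, ?_, ?_, ?_⟩
  · intro a b hab hba
    obtain ⟨i, rfl⟩ := hbij.2 a
    obtain ⟨j, rfl⟩ := hbij.2 b
    rw [hr] at hab hba
    rw [show i = j by omega]
  · intro a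
    obtain ⟨i, rfl⟩ := hbij.2 a
    simp [hr]
  · intro a b c hab hbc
    obtain ⟨i, rfl⟩ := hbij.2 a
    obtain ⟨j, rfl⟩ := hbij.2 b
    obtain ⟨k, rfl⟩ := hbij.2 c
    rw [hr] at *
    exact hab.trans hbc
  · intro a b
    obtain ⟨i, rfl⟩ := hbij.2 a
    obtain ⟨j, rfl⟩ := hbij.2 b
    refine ((Set.finite_Ioo i j).image f).subset fun g ⟨hig, hgj⟩ => ?_
    obtain ⟨k, rfl⟩ := hbij.2 g
    exact ⟨k, ⟨(hr _ _).1 hig, (hr _ _).1 hgj⟩, rfl⟩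
  · intro a
    obtain ⟨i, rfl⟩ := hbij.2 a
    exact ⟨f (i - 1), (hr _ _).2 (by omega)⟩
  · intro a
    obtain ⟨i, rfl⟩ := hbij.2 a
    exact ⟨f (i + 1), (hr _ _).2 (by omega)⟩

end IsAnchoredIso

theorem IsZOrder.exists_isAnchoredIso (hr : IsZOrder r) : ∃ f, IsAnchoredIso r f := by
  obtain ⟨hsto, hfin, hmin, hmax⟩ := hr
  let _ : LinearOrder G := linearOrderOfSTO r
  let _ : LocallyFiniteOrder G := LocallyFiniteOrder.ofFiniteIcc fun a b =>
    (((hfin a b).insert a).insert b).subset fun c ⟨hac, hcb⟩ => by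
      rcases hac.eq_or_lt with rfl | hac
      · exact .inr (.inl rfl)
      rcases hcb.eq_or_lt with rfl | hcb
      · exact .inl rfl
      exact .inr (.inr ⟨hac, hcb⟩)
  have _ : NoMinOrder G := ⟨hmin⟩
  have _ : NoMaxOrder G := ⟨hmax⟩
  let _ : SuccOrder G := LinearLocallyFiniteOrder.succOrder G
  let _ : PredOrder G := LinearLocallyFiniteOrder.predOrder G
  let φ : G ≃o ℤ := orderIsoIntOfLinearSuccPredArch
  exact ⟨fun k => φ.symm (k + φ 1),
    φ.symm.bijective.comp (Equiv.addRight (φ 1)).bijective, by simp,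
    fun i j => (add_lt_add_iff_right (φ 1)).symm.trans φ.symm.lt_iff_lt.symm⟩

theorem mem_ZOrders_iff_exists_isAnchoredIso {x : G × G → Bool} :
    x ∈ ZOrders G ↔ ∃ f, IsAnchoredIso (relOf x) f :=
  ⟨IsZOrder.exists_isAnchoredIso, fun ⟨_, hf⟩ => hf.isZOrder⟩

theorem biOf_eq (hf : IsAnchoredIso r f) : biOf r = f := by
  have h : ∃ f, IsAnchoredIso r f := ⟨f, hf⟩
  rw [biOf, dif_pos h]
  exact h.choose_spec.unique hf

theorem isAnchoredIso_biOf {x : G × G → Bool} (hx : x ∈ ZOrders G) :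
    IsAnchoredIso (relOf x) (biOf (relOf x)) := by
  obtain ⟨f, hf⟩ := mem_ZOrders_iff_exists_isAnchoredIso.1 hx
  rwa [biOf_eq hf]

def biOfFiber (G : Type*) [One G] (i : ℤ) (b : G) : Set (G × G → Bool) :=
  {x | x ∈ ZOrders G ∧ biOf (relOf x) i = b}

theorem biOfFiber_zero (b : G) : biOfFiber G 0 b = ZOrders G ∩ {_x | 1 = b} := by
  ext x
  exact and_congr_right fun hx => by rw [(isAnchoredIso_biOf hx).2.1]; rfl

theorem biOfFiber_add_one (i : ℤ) (c : G) :
    biOfFiber G (i + 1) c = ⋃ b, biOfFiber G i b ∩ {x | RelCovBy (relOf x) b c} := by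
  ext x
  simp only [biOfFiber, Set.mem_iUnion, Set.mem_inter_iff, Set.mem_ofPred_eq]
  constructor
  · rintro ⟨hx, h⟩
    exact ⟨_, ⟨hx, rfl⟩, ((isAnchoredIso_biOf hx).apply_add_one_eq_iff i c).1 h⟩
  · rintro ⟨b, ⟨hx, rfl⟩, h⟩
    exact ⟨hx, ((isAnchoredIso_biOf hx).apply_add_one_eq_iff i c).2 h⟩

theorem biOfFiber_sub_one (i : ℤ) (c : G) :
    biOfFiber G (i - 1) c = ⋃ b, biOfFiber G i b ∩ {x | RelCovBy (relOf x) c b} := by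
  ext x
  simp only [biOfFiber, Set.mem_iUnion, Set.mem_inter_iff, Set.mem_ofPred_eq]
  constructor
  · rintro ⟨hx, h⟩
    exact ⟨_, ⟨hx, rfl⟩, ((isAnchoredIso_biOf hx).apply_sub_one_eq_iff i c).1 h⟩
  · rintro ⟨b, ⟨hx, rfl⟩, h⟩
    exact ⟨hx, ((isAnchoredIso_biOf hx).apply_sub_one_eq_iff i c).2 h⟩

theorem pairwise_disjoint_biOfFiber (i : ℤ) : Pairwise (Disjoint on biOfFiber G i) :=
  fun _ _ hbc => Set.disjoint_left.2 fun _ hb hc => hbc (hb.2.symm.trans hc.2)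

theorem iUnion_biOfFiber (i : ℤ) : ⋃ b, biOfFiber G i b = ZOrders G := by
  ext x
  simp [biOfFiber]

end AnchoredIso

section Measurability

variable {G : Type*} [Countable G]

theorem measurableSet_ZOrders : MeasurableSet (ZOrders G) := by
  simp only [ZOrders, isZOrder_iff, relOf]
  measurability

theorem measurableSet_setOf_relCovBy (a c : G) :
    MeasurableSet {x : G × G → Bool | RelCovBy (relOf x) a c} := by
  simp only [RelCovBy, relOf]
  measurability

theorem measurableSet_biOfFiber [One G] (i : ℤ) (b : G) : MeasurableSet (biOfFiber G i b) := by
  induction i using Int.induction_on generalizing b with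
  | zero => rw [biOfFiber_zero]; exact measurableSet_ZOrders.inter (.const _)
  | succ i ih =>
    rw [biOfFiber_add_one]
    exact .iUnion fun c => (ih c).inter (measurableSet_setOf_relCovBy c b)
  | pred i ih =>
    rw [biOfFiber_sub_one]
    exact .iUnion fun c => (ih c).inter (measurableSet_setOf_relCovBy b c)

end Measurability

section Action

variable {G : Type*} [Group G]

theorem actB_actB (g h : G) (x : G × G → Bool) : actB g (actB h x) = actB (g * h) x := by
  funext p
  simp [actB, mul_assoc]

theorem actB_one (x : G × G → Bool) : actB (1 : G) x = x := by
  funext p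
  simp [actB]

theorem measurable_actB (g : G) : Measurable (actB g) :=
  measurable_pi_lambda _ fun _ => measurable_pi_apply _

theorem isAnchoredIso_actB_biOf {x : G × G → Bool} (hx : x ∈ ZOrders G) (p : ℤ) :
    IsAnchoredIso (relOf (actB (biOf (relOf x) p) x))
      (fun k => biOf (relOf x) (k + p) * (biOf (relOf x) p)⁻¹) := by
  obtain ⟨hbij, h0, hord⟩ := isAnchoredIso_biOf hx
  refine ⟨(Equiv.mulRight _).bijective.comp (hbij.comp (Equiv.addRight p).bijective), by simp,
    fun i j => ?_⟩
  simpa [relOf, actB] using (add_lt_add_iff_right p).symm.trans (hord (i + p) (j + p))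

theorem biOf_actB_biOf {x : G × G → Bool} (hx : x ∈ ZOrders G) (p : ℤ) :
    biOf (relOf (actB (biOf (relOf x) p) x)) =
      fun k => biOf (relOf x) (k + p) * (biOf (relOf x) p)⁻¹ :=
  biOf_eq (isAnchoredIso_actB_biOf hx p)

theorem actB_mem_ZOrders {x : G × G → Bool} (hx : x ∈ ZOrders G) (g : G) :
    actB g x ∈ ZOrders G := by
  obtain ⟨p, rfl⟩ := (isAnchoredIso_biOf hx).1.2 g
  exact (isAnchoredIso_actB_biOf hx p).isZOrder

theorem biOfFiber_one_eq_preimage (b : G) :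
    biOfFiber G 1 b = actB b ⁻¹' biOfFiber G (-1) b⁻¹ := by
  ext x
  constructor
  · rintro ⟨hx, rfl⟩
    refine ⟨actB_mem_ZOrders hx _, ?_⟩
    simp [biOf_actB_biOf hx, (isAnchoredIso_biOf hx).2.1]
  · rintro ⟨hy, hb⟩
    have hxy : x = actB (biOf (relOf (actB b x)) (-1)) (actB b x) := by
      rw [hb, actB_actB, inv_mul_cancel, actB_one]
    refine ⟨hxy ▸ actB_mem_ZOrders hy _, ?_⟩
    rw [hxy, biOf_actB_biOf hy, hb]
    simp [(isAnchoredIso_biOf hy).2.1]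

noncomputable def succShift (G : Type*) [Group G] (x : G × G → Bool) : G × G → Bool :=
  if x ∈ ZOrders G then actB (biOf (relOf x) 1) x else x

theorem succShift_iterate {x : G × G → Bool} (hx : x ∈ ZOrders G) (n : ℕ) :
    (succShift G)^[n] x = actB (biOf (relOf x) n) x := by
  induction n with
  | zero => rw [iterate_zero_apply, Nat.cast_zero, (isAnchoredIso_biOf hx).2.1, actB_one]
  | succ n ih =>
    rw [iterate_succ_apply', ih, succShift, if_pos (actB_mem_ZOrders hx _), biOf_actB_biOf hx,
      actB_actB, inv_mul_cancel_right, Nat.cast_succ, add_comm (1 : ℤ)]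

theorem measurePreserving_succShift [Countable G] (μ : Measure (G × G → Bool))
    (hinv : ∀ g : G, Measure.map (actB g) μ = μ) : MeasurePreserving (succShift G) μ μ :=
  measurePreserving_of_pieces (fun g => ⟨measurable_actB g, hinv g⟩)
    (fun b => measurableSet_biOfFiber (-1) b⁻¹) (pairwise_disjoint_biOfFiber 1)
    (fun _ _ hbc => pairwise_disjoint_biOfFiber (-1) (inv_injective.ne hbc))
    biOfFiber_one_eq_preimage (iUnion_biOfFiber 1)
    (inv_surjective.iUnion_comp (biOfFiber G (-1)) |>.trans (iUnion_biOfFiber (-1)))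
    (fun b x hx => by rw [succShift, if_pos hx.1, hx.2]) (fun x hx => if_neg hx)

def farSet (G : Type*) [Group G] (g : G) (M : ℕ) : Set (G × G → Bool) :=
  {x | x ∈ ZOrders G ∧ ∀ k : ℤ, |k| ≤ M → biOf (relOf x) k ≠ g}

theorem measurableSet_farSet [Countable G] (g : G) (M : ℕ) : MeasurableSet (farSet G g M) := by
  have h : farSet G g M = ZOrders G ∩ ⋂ (k : ℤ) (_ : |k| ≤ M), (biOfFiber G k g)ᶜ := by
    ext x
    simp only [farSet, biOfFiber, Set.mem_inter_iff, Set.mem_iInter, Set.mem_compl_iff,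
      Set.mem_ofPred_eq]
    exact and_congr_right fun hx => by simp [hx]
  rw [h]
  exact measurableSet_ZOrders.inter
    (.iInter fun k => .iInter fun _ => (measurableSet_biOfFiber k g).compl)

theorem tendsto_measure_farSet [Countable G] (μ : Measure (G × G → Bool)) [IsFiniteMeasure μ]
    (g : G) : Tendsto (fun M => μ (farSet G g M)) atTop (nhds 0) := by
  have hempty : ⋂ M, farSet G g M = ∅ := by
    refine Set.eq_empty_of_forall_notMem fun x hx => ?_
    have hx0 := (Set.mem_iInter.1 hx 0).1
    obtain ⟨k, hk⟩ := (isAnchoredIso_biOf hx0).1.2 g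
    exact (Set.mem_iInter.1 hx k.natAbs).2 k (by simp) hk
  have hanti : Antitone (farSet G g) := fun M M' hMM' x ⟨hx, hfar⟩ =>
    ⟨hx, fun k hk => hfar k (hk.trans (by exact_mod_cast hMM'))⟩
  simpa [hempty, Function.comp_def] using tendsto_measure_iInter_atTop
    (fun M => (measurableSet_farSet g M).nullMeasurableSet) hanti ⟨0, measure_ne_top μ _⟩

theorem birkhoffSum_indicator_farSet {x : G × G → Bool} (hx : x ∈ ZOrders G) (g : G) (M n : ℕ) :
    birkhoffSum (succShift G) ((farSet G g M).indicator 1) n x =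
      (#(farIndices (biOf (relOf x)) g M n) : ℝ) := by
  rw [farIndices, Finset.natCast_card_filter, birkhoffSum]
  refine Finset.sum_congr rfl fun i _ => ?_
  simp only [Set.indicator_apply, Pi.one_apply, farSet, Set.mem_ofPred_eq, succShift_iterate hx,
    actB_mem_ZOrders hx, biOf_actB_biOf hx, true_and, ne_eq, mul_inv_eq_iff_eq_mul]

end Action

/-- The left side elaborates with `range n` coerced to a `Finset ℤ` through the monad structure
of `Finset`, as in the statement of `multiorder_folner_property`. -/
theorem image_range_natCast {β : Type*} (f : ℤ → β) (n : ℕ) :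
    (range n).image (fun i => f (i : ℤ)) = (range n).image (fun i : ℕ => f i) := by
  simp only [Finset.pure_def, Finset.bind_def, Finset.sup_singleton_apply, Finset.image_image]
  rfl

theorem multiorder_folner_property_general {G : Type*} [Group G] [Countable G]
    (ν : Measure (G × G → Bool)) [IsProbabilityMeasure ν]
    (hsupp : ν (ZOrders G) = 1)
    (hinv : ∀ g : G, Measure.map (actB g) ν = ν) :
    ∀ᵐ x ∂ν, IsFolnerSeq
      (fun n => (Finset.range (n + 1)).image (fun i => biOf (relOf x) (i : ℤ))) := by
  have hZ : ∀ᵐ x ∂ν, x ∈ ZOrders G :=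
    (ae_mem_iff_measure_eq measurableSet_ZOrders.nullMeasurableSet).2 (by rw [hsupp, measure_univ])
  have hdens := fun g : G => ae_forall_exists_birkhoffSum_indicator_le
    (measurePreserving_succShift ν hinv) (measurableSet_farSet g) (tendsto_measure_farSet ν g)
  filter_upwards [hZ, ae_all_iff.2 hdens] with x hx hfar
  simp only [image_range_natCast]
  refine isFolnerSeq_image_of_farIndices (isAnchoredIso_biOf hx).1.1 fun g ε hε => ?_
  obtain ⟨M, hM⟩ := hfar g ε hε
  exact ⟨M, fun n => birkhoffSum_indicator_farSet hx g M n ▸ hM n⟩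

/-- Theorem 2.6: every multiorder (a `G`-invariant Borel probability measure `ν`
concentrated on the orders of type ℤ) on a countable group `G` admitting a Følner
sequence has the Følner property: for `ν`-almost every `≺`, the order intervals
`[e, b_n]^≺ = {bi_≺(0), …, bi_≺(n)}` form a Følner sequence in `G`. -/
theorem multiorder_folner_property {G : Type*} [Group G] [Countable G] [Infinite G]
    (hG : ∃ F : ℕ → Finset G, IsFolnerSeq F)
    (ν : Measure (G × G → Bool)) [IsProbabilityMeasure ν]
    (hsupp : ν (ZOrders G) = 1)
    (hinv : ∀ g : G, Measure.map (actB g) ν = ν) :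
    ∀ᵐ x ∂ν, IsFolnerSeq
      (fun n => (Finset.range (n + 1)).image (fun i => biOf (relOf x) (i : ℤ))) :=
  multiorder_folner_property_general ν hsupp hinv
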